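/- arXiv:1904.02958 — 4 statements merged into one kernel-verified Lean document; each statement's English description precedes it below -/
import Mathlib

section
/- Let α, β ≥ 0 with β ≥ α, and c > 0. Then the extended logistic loss ℓ_{α,β,c}(x) = ln_{α,c}(c + exp_{β,c}(-x)) satisfies ℓ''_{α,β,c}(x) = [β(c + h(x)) - α h(x)] · h(x)^{2β-1}/(c + h(x))^{α+1} ≥ 0 for all x in the interior of its domain, where h(x) = exp_{β,c}(-x); hence ℓ_{α,β,c} is convex on the interior of its domain. -/
/-!
Write `h(x) = exp_{β,c}(-x)`. The deformed exponential solves `exp_{β,c}' = exp_{β,c}^β` and the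
deformed logarithm has `ln_{α,c}'(u) = u^{-α}`, so `ℓ' = -(c + h)^{-α} h^β`, and one more
differentiation gives `ℓ'' = (β(c + h) - αh) h^{2β-1} / (c + h)^{α+1}`. Its first factor is
`βc + (β - α)h ≥ 0`. The interior of the domain is the open half-line
`c^{1-β} + (1-β)(-x) > 0`, on which `h > 0`, so `ℓ'' ≥ 0` there and `ℓ` is convex.
-/

open Real Set Topology

noncomputable section

def deformedLog (α c u : ℝ) : ℝ :=
  if α = 1 then Real.log (u / c) else (u ^ (1 - α) - c ^ (1 - α)) / (1 - α)

def deformedExp (β c v : ℝ) : ℝ :=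
  if β = 1 then c * Real.exp v else (c ^ (1 - β) + (1 - β) * v) ^ (1 / (1 - β))

def deformedExpDomain (β c : ℝ) : Set ℝ :=
  if β = 1 then Set.univ
  else if β < 1 then Set.Ici (c ^ (1 - β) / (β - 1))
  else Set.Iio (c ^ (1 - β) / (β - 1))

def extendedLogisticLoss (α β c x : ℝ) : ℝ :=
  deformedLog α c (c + deformedExp β c (-x))

/-- `ℓ''_{α,β,c}` as a function of `h = exp_{β,c}(-x)`. -/
def extendedLogisticLossDeriv2 (α β c h : ℝ) : ℝ :=
  (β * (c + h) - α * h) * h ^ (2 * β - 1) / (c + h) ^ (α + 1)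

end

variable {α β c : ℝ}

theorem interior_deformedExpDomain (β c : ℝ) :
    interior (deformedExpDomain β c) = {v | 0 < c ^ (1 - β) + (1 - β) * v} := by
  unfold deformedExpDomain
  split_ifs with hβ hlt
  · simp [hβ]
  · ext v
    simp only [interior_Ici, mem_Ioi, mem_ofPred_eq, div_lt_iff_of_neg (sub_neg.2 hlt)]
    constructor <;> intro h <;> linarith
  · have hgt : 1 < β := lt_of_le_of_ne (not_lt.1 hlt) (Ne.symm hβ)
    ext v
    simp only [interior_Iio, mem_Iio, mem_ofPred_eq, lt_div_iff₀ (sub_pos.2 hgt)]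
    constructor <;> intro h <;> linarith

theorem convex_setOf_pos_add_mul_neg (a m : ℝ) : Convex ℝ {x : ℝ | 0 < a + m * -x} := by
  refine convex_iff_forall_pos.2 fun x hx y hy s t hs ht hst => ?_
  simp only [mem_ofPred_eq, smul_eq_mul] at *
  have hcomb : a + m * -(s * x + t * y) = s * (a + m * -x) + t * (a + m * -y) := by
    linear_combination (-a) * hst
  rw [hcomb]
  positivity

theorem deformedExp_pos (hc : 0 < c) {v : ℝ} (hv : 0 < c ^ (1 - β) + (1 - β) * v) :
    0 < deformedExp β c v := by
  unfold deformedExp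
  split_ifs
  · positivity
  · exact rpow_pos_of_pos hv _

theorem hasDerivAt_deformedExp {v : ℝ} (hv : 0 < c ^ (1 - β) + (1 - β) * v) :
    HasDerivAt (deformedExp β c) (deformedExp β c v ^ β) v := by
  unfold deformedExp
  by_cases hβ : β = 1
  · simp only [hβ, if_true, rpow_one]
    exact (hasDerivAt_exp v).const_mul c
  · simp only [hβ, if_false]
    refine ((((hasDerivAt_id' v).const_mul (1 - β)).const_add (c ^ (1 - β))).rpow_const
      (p := 1 / (1 - β)) (Or.inl hv.ne')).congr_deriv ?_
    rw [← rpow_mul hv.le]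
    have : 1 / (1 - β) * β = 1 / (1 - β) - 1 := by field_simp; ring
    rw [this]
    field_simp

theorem hasDerivAt_deformedLog (hc : c ≠ 0) {u : ℝ} (hu : 0 < u) :
    HasDerivAt (deformedLog α c) (u ^ (-α)) u := by
  unfold deformedLog
  by_cases hα : α = 1
  · simp only [hα, if_true, rpow_neg_one]
    refine (((hasDerivAt_id' u).div_const c).log (div_ne_zero hu.ne' hc)).congr_deriv ?_
    field_simp
  · simp only [hα, if_false]
    refine ((((hasDerivAt_id' u).rpow_const (p := 1 - α) (Or.inl hu.ne')).sub_const
      (c ^ (1 - α))).div_const (1 - α)).congr_deriv ?_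
    rw [show 1 - α - 1 = -α by ring]
    field_simp

theorem hasDerivAt_deformedExp_neg {x : ℝ} (hx : 0 < c ^ (1 - β) + (1 - β) * -x) :
    HasDerivAt (fun y => deformedExp β c (-y)) (-deformedExp β c (-x) ^ β) x :=
  ((hasDerivAt_deformedExp hx).comp x (hasDerivAt_neg x)).congr_deriv (by ring)

theorem hasDerivAt_extendedLogisticLoss (hc : 0 < c) {x : ℝ}
    (hx : 0 < c ^ (1 - β) + (1 - β) * -x) :
    HasDerivAt (extendedLogisticLoss α β c)
      (-((c + deformedExp β c (-x)) ^ (-α) * deformedExp β c (-x) ^ β)) x := by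
  have hpos : 0 < c + deformedExp β c (-x) := add_pos hc (deformedExp_pos hc hx)
  refine ((hasDerivAt_deformedLog hc.ne' hpos).comp x
    ((hasDerivAt_deformedExp_neg hx).const_add c)).congr_deriv ?_
  ring

/-- The left side is the chain-rule derivative of `-(c + H)^{-α} H^β` at a point where `H = h`
and `H' = -H^β`. -/
theorem extendedLogisticLossDeriv2_eq {h : ℝ} (hh : 0 < h) (hch : 0 < c + h) :
    -(-h ^ β * -α * (c + h) ^ (-α - 1) * h ^ β + (c + h) ^ (-α) * (-h ^ β * β * h ^ (β - 1))) =
      extendedLogisticLossDeriv2 α β c h := by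
  unfold extendedLogisticLossDeriv2
  have hmul : h ^ β * h ^ (β - 1) = h ^ (2 * β - 1) := by
    rw [← rpow_add hh]; ring_nf
  have hsq : h ^ β * h ^ β = h ^ (2 * β - 1) * h := by
    rw [← rpow_add hh, ← rpow_add_one hh.ne']; ring_nf
  have hsucc : (c + h) ^ (α + 1) = (c + h) ^ α * (c + h) := rpow_add_one hch.ne' α
  have hneg_succ : (c + h) ^ (-α - 1) = ((c + h) ^ α * (c + h))⁻¹ := by
    rw [show -α - 1 = -(α + 1) by ring, rpow_neg hch.le, hsucc]
  rw [hneg_succ, rpow_neg hch.le, hsucc]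
  field_simp
  rw [show β * 2 - 1 = 2 * β - 1 by ring]
  linear_combination β * (c + h) * hmul - α * hsq

theorem extendedLogisticLossDeriv2_nonneg (hα : 0 ≤ α) (hαβ : α ≤ β) (hc : 0 ≤ c) {h : ℝ}
    (hh : 0 ≤ h) : 0 ≤ extendedLogisticLossDeriv2 α β c h := by
  have hcoef : 0 ≤ β * (c + h) - α * h := by nlinarith
  exact div_nonneg (mul_nonneg hcoef (rpow_nonneg hh _)) (rpow_nonneg (add_nonneg hc hh) _)

theorem hasDerivAt_deriv_extendedLogisticLoss (hc : 0 < c) {x : ℝ}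
    (hx : 0 < c ^ (1 - β) + (1 - β) * -x) :
    HasDerivAt (deriv (extendedLogisticLoss α β c))
      (extendedLogisticLossDeriv2 α β c (deformedExp β c (-x))) x := by
  have hderiv : deriv (extendedLogisticLoss α β c) =ᶠ[𝓝 x]
      fun y => -((c + deformedExp β c (-y)) ^ (-α) * deformedExp β c (-y) ^ β) := by
    have hopen : IsOpen {y : ℝ | 0 < c ^ (1 - β) + (1 - β) * -y} :=
      isOpen_lt continuous_const (by fun_prop)
    filter_upwards [hopen.mem_nhds hx] with y hy
    exact (hasDerivAt_extendedLogisticLoss hc hy).deriv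
  have hH := hasDerivAt_deformedExp_neg hx
  have hpos := deformedExp_pos hc hx
  have hcpos := add_pos hc hpos
  have hchain := (((hH.const_add c).rpow_const (p := -α) (Or.inl hcpos.ne')).mul
    (hH.rpow_const (p := β) (Or.inl hpos.ne'))).neg
  exact (hchain.congr_of_eventuallyEq hderiv).congr_deriv
    (extendedLogisticLossDeriv2_eq hpos hcpos)

theorem convexOn_extendedLogisticLoss (hα : 0 ≤ α) (hαβ : α ≤ β) (hc : 0 < c) :
    ConvexOn ℝ {x | 0 < c ^ (1 - β) + (1 - β) * -x} (extendedLogisticLoss α β c) :=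
  convexOn_of_deriv2_nonneg' (convex_setOf_pos_add_mul_neg _ _)
    (fun _ hx => (hasDerivAt_extendedLogisticLoss hc hx).differentiableAt.differentiableWithinAt)
    (fun _ hx =>
      (hasDerivAt_deriv_extendedLogisticLoss hc hx).differentiableAt.differentiableWithinAt)
    fun x hx => by
      show 0 ≤ deriv (deriv (extendedLogisticLoss α β c)) x
      rw [(hasDerivAt_deriv_extendedLogisticLoss hc hx).deriv]
      exact extendedLogisticLossDeriv2_nonneg hα hαβ hc.le (deformedExp_pos hc hx).le

/-- For `β ≥ α ≥ 0` and `c > 0`, the extended logistic loss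
`ℓ_{α,β,c}(x) = ln_{α,c}(c + exp_{β,c}(-x))` has second derivative
`[β(c+h) - αh]·h^(2β-1)/(c+h)^(α+1) ≥ 0` on the interior of its domain
(`h(x) = exp_{β,c}(-x)`), hence it is convex there. -/
theorem extended_logistic_loss_convex (α β c : ℝ) (hα : 0 ≤ α) (hαβ : α ≤ β) (hc : 0 < c) :
    let eexp : ℝ → ℝ := fun v =>
      if β = 1 then c * Real.exp v else (c ^ (1 - β) + (1 - β) * v) ^ (1 / (1 - β))
    let domExp : Set ℝ :=
      if β = 1 then Set.univ
      else if β < 1 then Set.Ici (c ^ (1 - β) / (β - 1))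
      else Set.Iio (c ^ (1 - β) / (β - 1))
    let domLoss : Set ℝ := {x : ℝ | -x ∈ domExp}
    let loss : ℝ → ℝ := fun x =>
      if α = 1 then Real.log ((c + eexp (-x)) / c)
      else ((c + eexp (-x)) ^ (1 - α) - c ^ (1 - α)) / (1 - α)
    (∀ x ∈ interior domLoss,
      deriv (deriv loss) x =
        (β * (c + eexp (-x)) - α * eexp (-x)) * (eexp (-x)) ^ (2 * β - 1) /
          (c + eexp (-x)) ^ (α + 1) ∧
      0 ≤ (β * (c + eexp (-x)) - α * eexp (-x)) * (eexp (-x)) ^ (2 * β - 1) /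
          (c + eexp (-x)) ^ (α + 1)) ∧
    ConvexOn ℝ (interior domLoss) loss := by
  intro eexp domExp domLoss loss
  have hdom : interior domLoss = {x | 0 < c ^ (1 - β) + (1 - β) * -x} := by
    rw [show domLoss = Homeomorph.neg ℝ ⁻¹' deformedExpDomain β c from rfl,
      ← (Homeomorph.neg ℝ).preimage_interior, interior_deformedExpDomain]
    rfl
  rw [hdom]
  exact ⟨fun x hx => ⟨(hasDerivAt_deriv_extendedLogisticLoss hc hx).deriv,
    extendedLogisticLossDeriv2_nonneg hα hαβ hc.le (deformedExp_pos hc hx).le⟩,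
    convexOn_extendedLogisticLoss hα hαβ hc⟩
end

section
/- For 0 < α < 1 and c > 0, the Logitron loss L_{α,c} is continuously differentiable on ℝ, with derivative L'_{α,c}(z) = -(exp_{α,c}(-z)/(c + exp_{α,c}(-z)))^α for z < -c_α and L'_{α,c}(z) = 0 for z ≥ -c_α; in particular the derivative tends to 0 as z → -c_α from the left. -/
/-!
With `u(z) = c^{1-α} + (1-α)(-z) = (1-α)(-c_α - z)`, the base of `exp_{α,c}(-z)`, replacing `u` by
`max u 0` leaves the loss and its claimed derivative unchanged for `z ≤ -c_α` and makes both vanish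
for `z ≥ -c_α`. So the two piecewise functions are given by single formulas on all of `ℝ`, and the
chain rule applies to them because `x ↦ (max x 0)^p` is differentiable for `p = 1/(1-α) > 1`.
-/

open Set Filter

theorem hasDerivAt_max_zero_rpow {p : ℝ} (hp : 1 < p) (x : ℝ) :
    HasDerivAt (fun y : ℝ => max y 0 ^ p) (p * max x 0 ^ (p - 1)) x := by
  have hzero : ∀ y : ℝ, y ≤ 0 → max y 0 ^ p = 0 := fun y hy => by
    rw [max_eq_right hy, Real.zero_rpow (by linarith)]
  have hpos : ∀ y : ℝ, 0 ≤ y → max y 0 ^ p = y ^ p := fun y hy => by rw [max_eq_left hy]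
  rcases lt_trichotomy x 0 with hx | rfl | hx
  · rw [max_eq_right hx.le, Real.zero_rpow (by linarith), mul_zero]
    exact (hasDerivAt_const x 0).congr_of_eventuallyEq
      (eventually_of_mem (Iio_mem_nhds hx) fun y hy => hzero y (le_of_lt hy))
  · have hleft : HasDerivWithinAt (fun y : ℝ => max y 0 ^ p) 0 (Iic 0) 0 :=
      (hasDerivWithinAt_const 0 _ 0).congr (fun y hy => hzero y hy) (hzero 0 le_rfl)
    have hright : HasDerivWithinAt (fun y : ℝ => max y 0 ^ p) (p * 0 ^ (p - 1)) (Ici 0) 0 :=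
      (Real.hasDerivAt_rpow_const (Or.inr hp.le)).hasDerivWithinAt.congr
        (fun y hy => hpos y hy) (hpos 0 le_rfl)
    rw [Real.zero_rpow (by linarith), mul_zero] at hright
    rw [max_self, Real.zero_rpow (by linarith), mul_zero]
    simpa only [Iic_union_Ici, hasDerivWithinAt_univ] using hleft.union hright
  · rw [max_eq_left hx.le]
    exact (Real.hasDerivAt_rpow_const (Or.inl hx.ne')).congr_of_eventuallyEq
      (eventually_of_mem (Ioi_mem_nhds hx) fun y hy => hpos y (le_of_lt hy))

namespace Logitron

/-- `exp_{α,c}(-z)` with its base `c^{1-α} + (1-α)(-z)` cut off at `0`, so that it vanishes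
beyond the threshold `-c_α = c^{1-α}/(1-α)` instead of taking junk `rpow` values there. -/
noncomputable def truncExp (α c z : ℝ) : ℝ :=
  max (c ^ (1 - α) + (1 - α) * -z) 0 ^ (1 / (1 - α))

noncomputable def loss (α c z : ℝ) : ℝ :=
  ((c + truncExp α c z) ^ (1 - α) - c ^ (1 - α)) / (1 - α)

noncomputable def lossDeriv (α c z : ℝ) : ℝ :=
  -(truncExp α c z / (c + truncExp α c z)) ^ α

variable {α c : ℝ}

theorem base_eq_mul_threshold_sub (hα1 : α < 1) (z : ℝ) :
    c ^ (1 - α) + (1 - α) * -z = (1 - α) * (c ^ (1 - α) / (1 - α) - z) := by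
  field_simp [(sub_pos.2 hα1).ne']
  ring

theorem truncExp_nonneg (z : ℝ) : 0 ≤ truncExp α c z :=
  Real.rpow_nonneg (le_max_right _ _) _

theorem truncExp_of_le_threshold (hα1 : α < 1) {z : ℝ} (hz : z ≤ c ^ (1 - α) / (1 - α)) :
    truncExp α c z = (c ^ (1 - α) + (1 - α) * -z) ^ (1 / (1 - α)) := by
  rw [truncExp, max_eq_left]
  rw [base_eq_mul_threshold_sub hα1]
  exact mul_nonneg (sub_pos.2 hα1).le (sub_nonneg.2 hz)

theorem truncExp_of_threshold_le (hα1 : α < 1) {z : ℝ} (hz : c ^ (1 - α) / (1 - α) ≤ z) :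
    truncExp α c z = 0 := by
  rw [truncExp, max_eq_right, Real.zero_rpow (one_div_ne_zero (sub_pos.2 hα1).ne')]
  rw [base_eq_mul_threshold_sub hα1]
  exact mul_nonpos_of_nonneg_of_nonpos (sub_pos.2 hα1).le (sub_nonpos.2 hz)

theorem loss_of_threshold_le (hα1 : α < 1) {z : ℝ} (hz : c ^ (1 - α) / (1 - α) ≤ z) :
    loss α c z = 0 := by
  rw [loss, truncExp_of_threshold_le hα1 hz, add_zero, sub_self, zero_div]

theorem lossDeriv_of_threshold_le (hα0 : 0 < α) (hα1 : α < 1) {z : ℝ}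
    (hz : c ^ (1 - α) / (1 - α) ≤ z) : lossDeriv α c z = 0 := by
  rw [lossDeriv, truncExp_of_threshold_le hα1 hz, zero_div, Real.zero_rpow hα0.ne', neg_zero]

theorem hasDerivAt_truncExp (hα0 : 0 < α) (hα1 : α < 1) (z : ℝ) :
    HasDerivAt (truncExp α c)
      (-max (c ^ (1 - α) + (1 - α) * -z) 0 ^ (α / (1 - α))) z := by
  have hβ : 0 < 1 - α := sub_pos.2 hα1
  have hp : 1 < 1 / (1 - α) := by rw [lt_div_iff₀ hβ]; linarith
  have hu : HasDerivAt (fun z => c ^ (1 - α) + (1 - α) * -z) (-(1 - α)) z := by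
    simpa using ((hasDerivAt_neg z).const_mul (1 - α)).const_add (c ^ (1 - α))
  refine ((hasDerivAt_max_zero_rpow hp _).comp z hu).congr_deriv ?_
  rw [show 1 / (1 - α) - 1 = α / (1 - α) by field_simp; ring]
  field_simp

theorem hasDerivAt_loss (hα0 : 0 < α) (hα1 : α < 1) (hc : 0 < c) (z : ℝ) :
    HasDerivAt (loss α c) (lossDeriv α c z) z := by
  have hE := truncExp_nonneg (α := α) (c := c) z
  have hcE : 0 < c + truncExp α c z := by linarith
  have hm := le_max_right (c ^ (1 - α) + (1 - α) * -z) 0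
  refine ((((Real.hasDerivAt_rpow_const (Or.inl hcE.ne')).comp z
    ((hasDerivAt_truncExp hα0 hα1 z).const_add c)).sub_const (c ^ (1 - α))).div_const
      (1 - α)).congr_deriv ?_
  have hEα : truncExp α c z ^ α = max (c ^ (1 - α) + (1 - α) * -z) 0 ^ (α / (1 - α)) := by
    rw [truncExp, ← Real.rpow_mul hm, one_div_mul_eq_div]
  rw [lossDeriv, Real.div_rpow hE hcE.le, hEα, show 1 - α - 1 = -α by ring,
    Real.rpow_neg hcE.le]
  field_simp [(sub_pos.2 hα1).ne']

theorem continuous_lossDeriv (hα0 : 0 ≤ α) (hα1 : α < 1) (hc : 0 < c) :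
    Continuous (lossDeriv α c) := by
  have hE : Continuous (truncExp α c) :=
    Continuous.rpow_const (by fun_prop) fun _ => Or.inr (by have := sub_pos.2 hα1; positivity)
  refine ((hE.div (continuous_const.add hE) fun z => ?_).rpow_const fun _ => Or.inr hα0).neg
  exact (add_pos_of_pos_of_nonneg hc (truncExp_nonneg z)).ne'

end Logitron

open Logitron

/-- For `0 < α < 1` and `c > 0`, the Logitron loss is continuously differentiable
on `ℝ`, with derivative `-(exp_{α,c}(-z)/(c+exp_{α,c}(-z)))^α` for `z < -c_α`
and `0` for `z ≥ -c_α`; the derivative tends to `0` as `z → -c_α` from the left. -/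
theorem logitron_contDiff (α c : ℝ) (hα0 : 0 < α) (hα1 : α < 1) (hc : 0 < c) :
    let cα : ℝ := c ^ (1 - α) / (α - 1)
    let eexp : ℝ → ℝ := fun v => (c ^ (1 - α) + (1 - α) * v) ^ (1 / (1 - α))
    let ℓ : ℝ → ℝ := fun z => ((c + eexp (-z)) ^ (1 - α) - c ^ (1 - α)) / (1 - α)
    let L : ℝ → ℝ := fun z => if z ≤ -cα then ℓ z else max 0 (-z)
    let L' : ℝ → ℝ := fun z =>
      if z < -cα then -(eexp (-z) / (c + eexp (-z))) ^ α else 0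
    (∀ z : ℝ, HasDerivAt L (L' z) z) ∧ Continuous L' ∧
      Filter.Tendsto L' (nhdsWithin (-cα) (Set.Iio (-cα))) (nhds 0) := by
  intro cα eexp ℓ L L'
  have hcα : -cα = c ^ (1 - α) / (1 - α) := by rw [← div_neg, neg_sub]
  have hcα_pos : 0 < -cα := hcα ▸ div_pos (Real.rpow_pos_of_pos hc _) (sub_pos.2 hα1)
  have hL : L = loss α c := funext fun z => by
    by_cases hz : z ≤ -cα
    · simp only [L, ℓ, eexp, if_pos hz, loss, truncExp_of_le_threshold hα1 (hcα ▸ hz)]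
    · have hz' : -cα ≤ z := (not_le.1 hz).le
      simp only [L, if_neg hz, loss_of_threshold_le hα1 (hcα ▸ hz')]
      exact max_eq_left (by linarith)
  have hL' : L' = lossDeriv α c := funext fun z => by
    by_cases hz : z < -cα
    · simp only [L', eexp, if_pos hz, lossDeriv, truncExp_of_le_threshold hα1 (hcα ▸ hz.le)]
    · simp only [L', if_neg hz, lossDeriv_of_threshold_le hα0 hα1 (hcα ▸ not_lt.1 hz)]
  have hcont := continuous_lossDeriv hα0.le hα1 hc
  rw [hL, hL']
  refine ⟨hasDerivAt_loss hα0 hα1 hc, hcont, ?_⟩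
  rw [← lossDeriv_of_threshold_le hα0 hα1 hcα.ge]
  exact (hcont.tendsto _).mono_left nhdsWithin_le_nhds
end

section
/- Let k ∈ ℕ, k ≥ 1, α = 1 - 1/k, and c > 0 with c_k := -k·c^{1/k} = -1 (i.e., c = k^{-k}), and let ℓ_{H,k}(z) = (max(0, 1-z))^k. Then for all z ∈ ℝ, the Logitron loss satisfies L_{α,c}(z) = ln_{α,c}(c + c·(max(0,1-z))^k), where c + c·(max(0,1-z))^k = c·(1 + ℓ_{H,k}(z)), so that L_{α,c}(z) = k·c^{1/k}·[(1 + ℓ_{H,k}(z))^{1/k} - 1]. -/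
/-- For `α = 1 - 1/k` (`k ≥ 1` a positive integer) and `c > 0` with
`c_k = -k·c^(1/k) = -1`, one has `Exp_{α,c}(-z) = c·ℓ_{H,k}(-z/c_k)` and the
Logitron loss equals `k·c^(1/k)·((1 + ℓ_{H,k}(z))^(1/k) - 1)`, where
`ℓ_{H,k}(z) = (max(0,1-z))^k` is the `k`-th order hinge loss. -/
theorem hinge_logitron_eq (k : ℕ) (hk : 1 ≤ k) (c : ℝ) (hc : 0 < c)
    (hck : -(k : ℝ) * c ^ (1 / (k : ℝ)) = -1) :
    ∀ z : ℝ,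
      (max 0 (c ^ (1 / (k : ℝ)) + (-z) / k)) ^ k =
        c * (max 0 (1 - (-z) / (-(k : ℝ) * c ^ (1 / (k : ℝ))))) ^ k ∧
      (k : ℝ) * ((c + (max 0 (c ^ (1 / (k : ℝ)) + (-z) / k)) ^ k) ^ (1 / (k : ℝ)) -
          c ^ (1 / (k : ℝ))) =
        (k : ℝ) * c ^ (1 / (k : ℝ)) * ((1 + (max 0 (1 - z)) ^ k) ^ (1 / (k : ℝ)) - 1) := by
  intro z
  have hk0 : (0:ℝ) < (k:ℝ) := by exact_mod_cast hk.trans_lt' (by norm_num)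
  have hkne : k ≠ 0 := by omega
  have ha : c ^ (1 / (k : ℝ)) = 1 / (k:ℝ) := by
    have := hck
    field_simp at this ⊢
    linarith
  have hcval : c = (1 / (k:ℝ)) ^ k := by
    rw [← ha, one_div, Real.rpow_inv_natCast_pow hc.le hkne]
  have hmax : max 0 (c ^ (1 / (k : ℝ)) + (-z) / k) = (1/(k:ℝ)) * max 0 (1 - z) := by
    rw [ha, mul_max_of_nonneg _ _ (by positivity), mul_zero]
    congr 1
    field_simp
    ring
  have hfirst : (max 0 (c ^ (1 / (k : ℝ)) + (-z) / k)) ^ k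
      = c * (max 0 (1 - z)) ^ k := by
    rw [hmax, mul_pow, ← hcval]
  constructor
  · rw [hck]
    have : (1 : ℝ) - (-z) / (-1) = 1 - z := by ring
    rw [this, hfirst]
  · rw [hfirst]
    have h1 : c + c * (max 0 (1 - z)) ^ k = c * (1 + (max 0 (1 - z)) ^ k) := by ring
    rw [h1, Real.mul_rpow hc.le (by positivity)]
    ring
end

section
/- For c > 0, the function L(z) = c^{-1}/(2 + cz) for z > -c^{-1} and L(z) = -z for z ≤ -c^{-1} is convex on ℝ and differentiable everywhere, with derivative L'(z) = max(-1, -(2 + cz)^{-2}) for z > -c^{-1}, and L'(z) = -1 for z ≤ -c^{-1}. -/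
/-! At `z = -c⁻¹` we have `2 + c z = 1`, so the two branches of `L` meet with the same value `c⁻¹`
and the same slope `-1`, and `L` is differentiable everywhere. On the right branch `2 + c z ≥ 1`,
so `-(2 + c z)⁻²` lies in `[-1, 0)` and increases with `z`: the derivative is monotone, hence `L`
is convex. -/

open Set

theorem hasDerivAt_ite_lt {f g f' g' : ℝ → ℝ} {a : ℝ}
    (hf : ∀ z, a ≤ z → HasDerivAt f (f' z) z) (hg : ∀ z, z ≤ a → HasDerivAt g (g' z) z)
    (hfga : f a = g a) (hfga' : f' a = g' a) (z : ℝ) :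
    HasDerivAt (fun z => if a < z then f z else g z) (if a < z then f' z else g' z) z := by
  set F : ℝ → ℝ := fun z => if a < z then f z else g z
  have hF_Iic : ∀ y ∈ Iic a, F y = g y := fun y hy => if_neg (not_lt.2 hy)
  have hF_Ici : ∀ y ∈ Ici a, F y = f y := fun y hy => by
    rcases (mem_Ici.1 hy).lt_or_eq with hy | rfl
    · exact if_pos hy
    · exact (if_neg (lt_irrefl _)).trans hfga.symm
  rcases lt_trichotomy z a with hz | rfl | hz
  · rw [if_neg (not_lt.2 hz.le)]
    exact (hg z hz.le).congr_of_eventuallyEq <|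
      Filter.eventually_of_mem (Iic_mem_nhds hz) hF_Iic
  · have hleft : HasDerivWithinAt F (g' z) (Iic z) z :=
      (hg z le_rfl).hasDerivWithinAt.congr_of_mem hF_Iic self_mem_Iic
    have hright : HasDerivWithinAt F (g' z) (Ici z) z :=
      hfga' ▸ (hf z le_rfl).hasDerivWithinAt.congr_of_mem hF_Ici self_mem_Ici
    rw [if_neg (lt_irrefl z)]
    simpa only [Iic_union_Ici, hasDerivWithinAt_univ] using hleft.union hright
  · rw [if_pos hz]
    exact (hf z hz.le).congr_of_eventuallyEq <|
      Filter.eventually_of_mem (Ioi_mem_nhds hz) fun y hy => if_pos hy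

theorem monotone_ite_max {h : ℝ → ℝ} {a : ℝ} (b : ℝ) (hh : MonotoneOn h (Ioi a)) :
    Monotone fun z => if a < z then max b (h z) else b := by
  intro x y hxy
  by_cases hx : a < x
  · have hy : a < y := hx.trans_le hxy
    simp only [if_pos hx, if_pos hy]
    exact max_le_max le_rfl (hh hx hy hxy)
  · simp only [if_neg hx]
    split_ifs
    exacts [le_max_left _ _, le_rfl]

theorem hasDerivAt_inv_div_add_mul {a c z : ℝ} (hc : c ≠ 0) (hz : a + c * z ≠ 0) :
    HasDerivAt (fun z => c⁻¹ / (a + c * z)) (-((a + c * z) ^ 2)⁻¹) z := by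
  have hden : HasDerivAt (fun z => a + c * z) c z := by
    simpa using ((hasDerivAt_id' z).const_mul c).const_add a
  refine ((hasDerivAt_const z c⁻¹).div hden hz).congr_deriv ?_
  field_simp
  ring

section HPlusLogitron

variable {c : ℝ}

theorem one_le_two_add_mul_of_neg_inv_le (hc : 0 < c) {z : ℝ} (hz : -c⁻¹ ≤ z) : 1 ≤ 2 + c * z := by
  have := mul_le_mul_of_nonneg_left hz hc.le
  rw [mul_neg, mul_inv_cancel₀ hc.ne'] at this
  linarith

theorem monotoneOn_neg_inv_sq_two_add_mul (hc : 0 < c) :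
    MonotoneOn (fun z => -((2 + c * z) ^ 2)⁻¹) (Ioi (-c⁻¹)) := by
  intro x hx y _ hxy
  have hx1 := one_le_two_add_mul_of_neg_inv_le hc (le_of_lt hx)
  have : 0 < 2 + c * x := by linarith
  dsimp only
  gcongr

theorem hasDerivAt_inv_div_two_add_mul_of_neg_inv_le (hc : 0 < c) {z : ℝ} (hz : -c⁻¹ ≤ z) :
    HasDerivAt (fun z => c⁻¹ / (2 + c * z)) (max (-1) (-((2 + c * z) ^ 2)⁻¹)) z := by
  have h1 := one_le_two_add_mul_of_neg_inv_le hc hz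
  rw [max_eq_right (neg_le_neg (inv_le_one_of_one_le₀ (one_le_pow₀ h1)))]
  exact hasDerivAt_inv_div_add_mul hc.ne' (by linarith)

end HPlusLogitron

/-- For `c > 0`, the H+Logitron loss with `k = -1` (`α = 2`),
`L(z) = c⁻¹/(2+cz)` for `z > -c⁻¹` and `L(z) = -z` otherwise, is convex on `ℝ`
and differentiable everywhere, with derivative `max(-1, -(2+cz)⁻²)` for
`z > -c⁻¹` and `-1` otherwise. -/
theorem hplus_logitron_convex_diff (c : ℝ) (hc : 0 < c) :
    let L : ℝ → ℝ := fun z => if -c⁻¹ < z then c⁻¹ / (2 + c * z) else -z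
    let L' : ℝ → ℝ := fun z =>
      if -c⁻¹ < z then max (-1) (-((2 + c * z) ^ 2)⁻¹) else -1
    ConvexOn ℝ Set.univ L ∧ ∀ z : ℝ, HasDerivAt L (L' z) z := by
  intro L L'
  have hglue : 2 + c * -c⁻¹ = 1 := by
    rw [mul_neg, mul_inv_cancel₀ hc.ne']
    norm_num
  have hderiv : ∀ z, HasDerivAt L (L' z) z :=
    hasDerivAt_ite_lt (fun z => hasDerivAt_inv_div_two_add_mul_of_neg_inv_le hc)
      (fun z _ => hasDerivAt_neg z) (by simp only [hglue]; ring) (by simp only [hglue]; norm_num)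
  refine ⟨Monotone.convexOn_univ_of_deriv (fun z => (hderiv z).differentiableAt) ?_, hderiv⟩
  rw [show deriv L = L' from funext fun z => (hderiv z).deriv]
  exact monotone_ite_max (-1) (monotoneOn_neg_inv_sq_two_add_mul hc)
end
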